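/- arXiv:1507.08309 — 2 statements merged into one kernel-verified Lean document; each statement's English description precedes it below -/
import Mathlib

section
/- Let σ > 0, let q ∈ ℝ^m be a query, and define f(D) ∈ ℝ^c by f(D)_j = GK_j(D, q) for each class j ∈ Fin c. Then for every labeled dataset D and every labeled point (d_A, j₀), the L1 distance satisfies ‖f(D ∪ {(d_A, j₀)}) − f(D)‖₁ = K_σ(‖d_A − q‖) ≤ 1/(σ√(2π)), and equality with 1/(σ√(2π)) holds when d_A = q. Hence the sensitivity of f over datasets differing by one inserted element is exactly 1/(σ√(2π)). -/
open Real

/-- The Gaussian kernel with parameter `σ`. -/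
noncomputable def gaussK (σ : ℝ) (t : ℝ) : ℝ :=
  (1 / (σ * Real.sqrt (2 * Real.pi))) * Real.exp (-(t ^ 2) / (2 * σ ^ 2))

/-- The class score `GK_j(D, q)`. -/
noncomputable def GK {m c : ℕ} (σ : ℝ) (q : EuclideanSpace ℝ (Fin m)) (j : Fin c)
    (D : Multiset (EuclideanSpace ℝ (Fin m) × Fin c)) : ℝ :=
  (D.map (fun p => if p.2 = j then gaussK σ ‖p.1 - q‖ else 0)).sum

lemma gaussK_nonneg {σ : ℝ} (hσ : 0 ≤ σ) (t : ℝ) : 0 ≤ gaussK σ t := by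
  unfold gaussK
  positivity

lemma gaussK_le {σ : ℝ} (hσ : 0 ≤ σ) (t : ℝ) :
    gaussK σ t ≤ 1 / (σ * Real.sqrt (2 * Real.pi)) := by
  have hexp : Real.exp (-(t ^ 2) / (2 * σ ^ 2)) ≤ 1 :=
    Real.exp_le_one_iff.mpr <|
      div_nonpos_of_nonpos_of_nonneg (neg_nonpos.mpr (sq_nonneg t)) (by positivity)
  unfold gaussK
  exact mul_le_of_le_one_right (by positivity) hexp

@[simp]
lemma gaussK_zero (σ : ℝ) : gaussK σ 0 = 1 / (σ * Real.sqrt (2 * Real.pi)) := by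
  simp [gaussK]

lemma GK_cons {m c : ℕ} (σ : ℝ) (q : EuclideanSpace ℝ (Fin m)) (j : Fin c)
    (p : EuclideanSpace ℝ (Fin m) × Fin c) (D : Multiset (EuclideanSpace ℝ (Fin m) × Fin c)) :
    GK σ q j (p ::ₘ D) = (if p.2 = j then gaussK σ ‖p.1 - q‖ else 0) + GK σ q j D := by
  simp only [GK, Multiset.map_cons, Multiset.sum_cons]

lemma sum_abs_GK_cons_sub {m c : ℕ} (σ : ℝ) (q : EuclideanSpace ℝ (Fin m))
    (p : EuclideanSpace ℝ (Fin m) × Fin c) (D : Multiset (EuclideanSpace ℝ (Fin m) × Fin c)) :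
    ∑ j : Fin c, |GK σ q j (p ::ₘ D) - GK σ q j D| = |gaussK σ ‖p.1 - q‖| := by
  simp only [GK_cons, add_sub_cancel_right, apply_ite (|·|), abs_zero]
  exact Finset.sum_ite_eq _ _ _ |>.trans (if_pos (Finset.mem_univ _))

theorem stmt_4 {m c : ℕ} (σ : ℝ) (hσ : 0 < σ)
    (q : EuclideanSpace ℝ (Fin m))
    (D : Multiset (EuclideanSpace ℝ (Fin m) × Fin c))
    (dA : EuclideanSpace ℝ (Fin m)) (j₀ : Fin c) :
    (∑ j : Fin c, |GK σ q j ((dA, j₀) ::ₘ D) - GK σ q j D|)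
        = gaussK σ ‖dA - q‖ ∧
      gaussK σ ‖dA - q‖ ≤ 1 / (σ * Real.sqrt (2 * Real.pi)) ∧
      (dA = q → gaussK σ ‖dA - q‖ = 1 / (σ * Real.sqrt (2 * Real.pi))) := by
  refine ⟨?_, gaussK_le hσ.le _, ?_⟩
  · rw [sum_abs_GK_cons_sub, abs_of_nonneg (gaussK_nonneg hσ.le _)]
  · rintro rfl
    rw [sub_self, norm_zero, gaussK_zero]
end

section
/- Let σ > 0, let D be a labeled dataset of points in ℝ^m, let q ∈ ℝ^m be a query, let B ∈ Fin c be a class, and let y ∈ ℝ^m be any point whatsoever. Then there exists n ∈ ℕ such that after adding n copies of the labeled point (y, B) to D, the class-B score strictly exceeds every other class score: GK_B(D ∪ n·{(y, B)}, q) > GK_j(D ∪ n·{(y, B)}, q) for every class j ≠ B. That is, under Gaussian kernel density classification, adding sufficiently many points of class B changes the classification of q to B no matter how far away the added points are. -/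
/-! The Gaussian kernel never vanishes, so each added copy of `(y, B)` raises the class-`B` score
by the same positive amount `K_σ(‖y - q‖)`, however far `y` is from `q`, and leaves every other
score unchanged. Since there are finitely many classes, the Archimedean property gives enough
copies. -/

open Real

open Filter

lemma gaussK_pos {σ : ℝ} (hσ : 0 < σ) (t : ℝ) : 0 < gaussK σ t := by
  unfold gaussK
  have : 0 < √(2 * π) := by positivity
  positivity

section GK

variable {m c : ℕ} (σ : ℝ) (q : EuclideanSpace ℝ (Fin m))

lemma GK_add (j : Fin c) (D E : Multiset (EuclideanSpace ℝ (Fin m) × Fin c)) :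
    GK σ q j (D + E) = GK σ q j D + GK σ q j E := by
  simp [GK]

lemma GK_replicate_self (n : ℕ) (x : EuclideanSpace ℝ (Fin m)) (i : Fin c) :
    GK σ q i (Multiset.replicate n (x, i)) = n * gaussK σ ‖x - q‖ := by
  simp [GK, Multiset.map_replicate]

lemma GK_replicate_of_ne {i j : Fin c} (h : j ≠ i) (n : ℕ) (x : EuclideanSpace ℝ (Fin m)) :
    GK σ q j (Multiset.replicate n (x, i)) = 0 := by
  simp [GK, Multiset.map_replicate, h.symm]

end GK

lemma exists_nat_forall_lt_add_mul {ι : Type*} [Finite ι] (f : ι → ℝ) (a : ℝ) {g : ℝ}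
    (hg : 0 < g) : ∃ n : ℕ, ∀ i, f i < a + n * g := by
  have h : Tendsto (fun n : ℕ => a + n * g) atTop atTop :=
    tendsto_atTop_add_const_left _ _ (tendsto_natCast_atTop_atTop.atTop_mul_const hg)
  exact (eventually_all.2 fun i => h.eventually_gt_atTop (f i)).exists

theorem stmt_15 {m c : ℕ} (σ : ℝ) (hσ : 0 < σ)
    (D : Multiset (EuclideanSpace ℝ (Fin m) × Fin c))
    (q : EuclideanSpace ℝ (Fin m)) (B : Fin c) (y : EuclideanSpace ℝ (Fin m)) :
    ∃ n : ℕ, ∀ j : Fin c, j ≠ B →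
      GK σ q j (D + Multiset.replicate n (y, B))
        < GK σ q B (D + Multiset.replicate n (y, B)) := by
  obtain ⟨n, hn⟩ := exists_nat_forall_lt_add_mul (fun j => GK σ q j D) (GK σ q B D)
    (gaussK_pos hσ ‖y - q‖)
  refine ⟨n, fun j hj => ?_⟩
  rw [GK_add, GK_add, GK_replicate_self, GK_replicate_of_ne σ q hj, add_zero]
  exact hn j
end
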